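/- arXiv:2602.21465 — 2 statements merged into one kernel-verified Lean document; each statement's English description precedes it below -/
import Mathlib

section
/- Let X_1, …, X_n be random vectors in ℝ^d, each X_i measurable with respect to F_i and integrable, such that |X_i| ≤ M P-almost surely and the conditional expectation E_P[X_i | F_{i−1}] lies in Θ_i P-almost surely, for each i = 1, …, n. Then for every t > 0, P( ρ_Θ( (1/n) ∑_{i=1}^n X_i ) > t ) ≤ 2 · 5^d · exp( − n t² / (32 M²) ). -/
open MeasureTheory ProbabilityTheory Real Metric Set ENNReal NNReal

noncomputable section


section NetSec
variable (d : ℕ)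
local notation "E" => EuclideanSpace ℝ (Fin d)

lemma sep_card_le (hd : 1 ≤ d) (T : Finset E)
    (hT1 : ∀ x ∈ T, ‖x‖ ≤ 1)
    (hsep : ∀ x ∈ T, ∀ y ∈ T, x ≠ y → 1/2 ≤ dist x y) : T.card ≤ 5 ^ d := by
  haveI : Nontrivial E := by
    refine ⟨0, EuclideanSpace.single ⟨0, hd⟩ (1:ℝ), fun h => ?_⟩
    have := congrArg (fun v : E => v ⟨0, hd⟩) h
    simp [EuclideanSpace.single_apply] at this
  have hdisj : (T : Set E).PairwiseDisjoint (fun x => ball x 4⁻¹) := by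
    intro x hx y hy hxy
    refine Set.disjoint_left.2 fun z hzx hzy => ?_
    have h1 : dist x y ≤ dist z x + dist z y := dist_triangle_left x y z
    have h2 := hsep x hx y hy hxy
    have := mem_ball.1 hzx
    have := mem_ball.1 hzy
    rw [dist_comm] at *
    linarith [mem_ball.1 hzx, mem_ball.1 hzy]
  have hsum : ∑ x ∈ T, volume (ball x 4⁻¹) = volume (⋃ x ∈ T, ball x 4⁻¹) :=
    (measure_biUnion_finset hdisj fun _ _ => measurableSet_ball).symm
  have hsub : (⋃ x ∈ T, ball x 4⁻¹) ⊆ closedBall (0 : E) (5/4) := by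
    refine Set.iUnion₂_subset fun x hx z hz => ?_
    have h1 : dist z x < 4⁻¹ := mem_ball.1 hz
    have h2 : dist x 0 ≤ 1 := by simpa [dist_eq_norm] using hT1 x hx
    have := dist_triangle z x 0
    simp only [mem_closedBall]
    linarith
  have hval : ∀ x : E, volume (ball x 4⁻¹)
      = ENNReal.ofReal ((4⁻¹ : ℝ) ^ d) * volume (ball (0:E) 1) := fun x => by
    rw [Measure.addHaar_ball volume x (by norm_num : (0:ℝ) ≤ 4⁻¹), finrank_euclideanSpace_fin]
  have hcb : volume (closedBall (0:E) (5/4))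
      = ENNReal.ofReal ((5/4 : ℝ) ^ d) * volume (ball (0:E) 1) := by
    rw [Measure.addHaar_closedBall_eq_addHaar_ball,
      Measure.addHaar_ball volume _ (by norm_num : (0:ℝ) ≤ 5/4), finrank_euclideanSpace_fin]
  have hmain : (T.card : ℝ≥0∞) * (ENNReal.ofReal ((4⁻¹ : ℝ) ^ d) * volume (ball (0:E) 1))
      ≤ ENNReal.ofReal ((5/4 : ℝ) ^ d) * volume (ball (0:E) 1) := by
    calc (T.card : ℝ≥0∞) * (ENNReal.ofReal ((4⁻¹ : ℝ) ^ d) * volume (ball (0:E) 1))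
        = ∑ x ∈ T, volume (ball x 4⁻¹) := by
          simp [hval, Finset.sum_const, mul_comm]
      _ = volume (⋃ x ∈ T, ball x 4⁻¹) := hsum
      _ ≤ volume (closedBall (0 : E) (5/4)) := measure_mono hsub
      _ = _ := hcb
  have hv0 : volume (ball (0:E) 1) ≠ 0 := (measure_ball_pos volume 0 one_pos).ne'
  have hvt : volume (ball (0:E) 1) ≠ ⊤ := measure_ball_lt_top.ne
  rw [← mul_assoc, ENNReal.mul_le_mul_iff_left hv0 hvt] at hmain
  have h2 : (T.card : ℝ≥0∞) * ENNReal.ofReal ((4⁻¹ : ℝ) ^ d)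
      ≤ (5^d : ℕ) * ENNReal.ofReal ((4⁻¹ : ℝ) ^ d) := by
    refine hmain.trans_eq ?_
    rw [← ENNReal.ofReal_natCast, ← ENNReal.ofReal_mul (by positivity)]
    congr 1
    push_cast
    rw [← mul_pow]
    norm_num
  have h4 : ENNReal.ofReal ((4⁻¹ : ℝ) ^ d) ≠ 0 := by
    exact (ENNReal.ofReal_pos.2 (by positivity)).ne'
  rw [ENNReal.mul_le_mul_iff_left h4 ENNReal.ofReal_ne_top] at h2
  exact_mod_cast h2

lemma exists_net (hd : 1 ≤ d) :
    ∃ V : Finset (EuclideanSpace ℝ (Fin d)), V.Nonempty ∧ V.card ≤ 5 ^ d ∧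
      (∀ v ∈ V, ‖v‖ ≤ 1) ∧
      ∀ x : EuclideanSpace ℝ (Fin d), ∃ v ∈ V, ‖x‖ ≤ 2 * (inner ℝ v x : ℝ) := by
  set 𝒮 : Set (Set E) := {S | S ⊆ closedBall 0 1 ∧
    ∀ x ∈ S, ∀ y ∈ S, x ≠ y → 1/2 ≤ dist x y} with h𝒮
  have h0 : ({0} : Set E) ∈ 𝒮 := by
    constructor
    · simp [Set.singleton_subset_iff]
    · rintro x rfl y rfl h; exact absurd rfl h
  obtain ⟨S, hS0, hSmem, hSmax⟩ : ∃ S, ({0} : Set E) ⊆ S ∧ S ∈ 𝒮 ∧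
      ∀ s ∈ 𝒮, S ⊆ s → s ⊆ S := by
    obtain ⟨S, h1, h2⟩ := zorn_subset_nonempty 𝒮 (fun c hc hchain _ => by
      refine ⟨⋃₀ c, ⟨?_, ?_⟩, fun s hs => Set.subset_sUnion_of_mem hs⟩
      · exact Set.sUnion_subset fun s hs => (hc hs).1
      · rintro x ⟨s, hs, hxs⟩ y ⟨s', hs', hys'⟩ hxy
        rcases hchain.total hs hs' with h | h
        · exact (hc hs').2 x (h hxs) y hys' hxy
        · exact (hc hs).2 x hxs y (h hys') hxy) _ h0
    exact ⟨S, h1, h2.1, fun s hs hSs => h2.2 hs hSs⟩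
  -- every finite subset has card ≤ 5^d
  have hcount : ∀ T : Finset E, ↑T ⊆ S → T.card ≤ 5 ^ d := by
    intro T hT
    refine sep_card_le d hd T (fun x hx => ?_) (fun x hx y hy hxy => ?_)
    · simpa [mem_closedBall, dist_eq_norm] using hSmem.1 (hT hx)
    · exact hSmem.2 x (hT hx) y (hT hy) hxy
  have hfin : S.Finite := by
    by_contra h
    obtain ⟨T, hT, hcard⟩ := Set.Infinite.exists_subset_card_eq h (5^d + 1)
    have := hcount T hT
    omega
  refine ⟨hfin.toFinset, ⟨0, by simp [hfin, hS0 rfl]⟩, ?_, ?_, ?_⟩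
  · exact hcount _ (by simp)
  · intro v hv
    have : v ∈ S := by simpa using hv
    simpa [mem_closedBall, dist_eq_norm] using hSmem.1 this
  · intro x
    by_cases hx : x = 0
    · exact ⟨0, by simp [hfin, hS0 rfl], by simp [hx]⟩
    have hxn : (0:ℝ) < ‖x‖ := norm_pos_iff.2 hx
    set u : E := ‖x‖⁻¹ • x with hu
    have hun : ‖u‖ = 1 := by
      rw [hu, norm_smul]; simp [abs_of_nonneg (inv_nonneg.2 hxn.le), inv_mul_cancel₀ hxn.ne']
    have hucb : u ∈ closedBall (0:E) 1 := by simp [mem_closedBall, dist_eq_norm, hun]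
    -- there is v ∈ S with dist u v ≤ 1/2
    have hcover : ∃ v ∈ S, dist u v ≤ 1/2 := by
      by_contra h
      push_neg at h
      have huS : u ∉ S := fun hu' => absurd (h u hu') (by simp)
      have hins : insert u S ∈ 𝒮 := by
        constructor
        · exact Set.insert_subset hucb hSmem.1
        · rintro a (rfl | ha) b (rfl | hb) hab
          · exact absurd rfl hab
          · exact (h b hb).le
          · rw [dist_comm]; exact (h a ha).le
          · exact hSmem.2 a ha b hb hab
      exact huS (hSmax _ hins (Set.subset_insert _ _) (Set.mem_insert _ _))
    obtain ⟨v, hvS, hvd⟩ := hcover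
    refine ⟨v, by simpa [hfin] using hvS, ?_⟩
    have h1 : (inner ℝ u x : ℝ) = ‖x‖ := by
      rw [hu, real_inner_smul_left, real_inner_self_eq_norm_sq, sq]
      field_simp
    have h2 : (inner ℝ (u - v) x : ℝ) ≤ ‖x‖ / 2 := by
      calc (inner ℝ (u - v) x : ℝ) ≤ |inner ℝ (u - v) x| := le_abs_self _
        _ ≤ ‖u - v‖ * ‖x‖ := abs_real_inner_le_norm _ _
        _ ≤ (1/2) * ‖x‖ := by
            have : ‖u - v‖ ≤ 1/2 := by rwa [← dist_eq_norm]
            nlinarith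
        _ = ‖x‖ / 2 := by ring
    have h3 : (inner ℝ v x : ℝ) = (inner ℝ u x : ℝ) - (inner ℝ (u - v) x : ℝ) := by
      rw [inner_sub_left]; ring
    rw [h3, h1]
    linarith

end NetSec


section AzumaSec
variable {Ω : Type*} {mΩ : MeasurableSpace Ω} {μ : Measure Ω} [IsProbabilityMeasure μ]

lemma exp_le_cosh_add {y c l : ℝ} (hc : 0 < c) (hy : |y| ≤ c) :
    Real.exp (l * y) ≤ Real.cosh (l*c) + (Real.sinh (l*c)/c) * y := by
  have hy1 : -c ≤ y := (abs_le.1 hy).1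
  have hy2 : y ≤ c := (abs_le.1 hy).2
  have h1 : 0 ≤ (c - y)/(2*c) := div_nonneg (by linarith) (by linarith)
  have h2 : 0 ≤ (c + y)/(2*c) := div_nonneg (by linarith) (by linarith)
  have hab : (c - y)/(2*c) + (c + y)/(2*c) = 1 := by field_simp; ring
  have hcx := convexOn_exp.2 (Set.mem_univ (-(l*c))) (Set.mem_univ (l*c)) h1 h2 hab
  simp only [smul_eq_mul] at hcx
  have harg : (c - y)/(2*c) * -(l*c) + (c + y)/(2*c) * (l*c) = l * y := by
    field_simp; ring
  rw [harg] at hcx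
  refine hcx.trans_eq ?_
  rw [Real.cosh_eq, Real.sinh_eq]
  field_simp
  ring

/-- Conditional Hoeffding-type mgf bound. -/
lemma condexp_exp_le {m : MeasurableSpace Ω} (hm : m ≤ mΩ) {Y : Ω → ℝ}
    (hYm : AEStronglyMeasurable[mΩ] Y μ) {c l : ℝ} (hc : 0 < c) (hl : 0 ≤ l)
    (hbdd : ∀ᵐ ω ∂μ, |Y ω| ≤ c) (hce : μ[Y|m] =ᵐ[μ] 0) :
    μ[fun ω => Real.exp (l * Y ω)|m] ≤ᵐ[μ] fun _ => Real.exp ((l*c)^2/2) := by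
  have hY : Integrable Y μ := (integrable_const c).mono' hYm (by
      filter_upwards [hbdd] with ω h
      simpa [Real.norm_eq_abs] using h)
  have hexpInt : Integrable (fun ω => Real.exp (l * Y ω)) μ := by
    refine (integrable_const (Real.exp (l * c))).mono'
      (Real.continuous_exp.comp_aestronglyMeasurable (hYm.const_mul l)) ?_
    filter_upwards [hbdd] with ω h
    rw [Real.norm_eq_abs, abs_of_pos (Real.exp_pos _), Real.exp_le_exp]
    exact mul_le_mul_of_nonneg_left (abs_le.1 h).2 hl
  have hRHSInt : Integrable (fun ω => Real.cosh (l*c) + (Real.sinh (l*c)/c) * Y ω) μ :=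
    (integrable_const _).add (hY.const_mul _)
  have hmono := condExp_mono (m := m) hexpInt hRHSInt
    (by filter_upwards [hbdd] with ω h using exp_le_cosh_add hc h)
  have heq : μ[fun ω => Real.cosh (l*c) + (Real.sinh (l*c)/c) * Y ω|m]
      =ᵐ[μ] fun _ => Real.cosh (l*c) := by
    have h1 := condExp_add (μ := μ) (m := m)
      (integrable_const (Real.cosh (l*c))) (hY.const_mul (Real.sinh (l*c)/c))
    have h2 : μ[fun ω => (Real.sinh (l*c)/c) * Y ω|m]
        =ᵐ[μ] (Real.sinh (l*c)/c) • μ[Y|m] := by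
      exact condExp_smul (μ := μ) (m := m) (Real.sinh (l*c)/c) Y
    filter_upwards [h1, h2, hce] with ω hω1 hω2 hω3
    have hstep : (μ[fun x => Real.cosh (l*c) + (Real.sinh (l*c)/c) * Y x|m]) ω
        = (μ[(fun (_ : Ω) => Real.cosh (l*c))|m]) ω
          + (μ[fun x => (Real.sinh (l*c)/c) * Y x|m]) ω := by
      exact hω1
    rw [hstep, hω2, condExp_const hm]
    simp [hω3]
  filter_upwards [hmono, heq] with ω h1 h2
  rw [h2] at h1
  exact h1.trans (Real.cosh_le_exp_half_sq _)

/-- mgf bound for martingale differences. -/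
lemma mgf_bound (μ : Measure Ω) [IsProbabilityMeasure μ] (n : ℕ)
    (ℱ : ℕ → MeasurableSpace Ω) (hmono : Monotone ℱ) (hle : ∀ i, ℱ i ≤ mΩ)
    (Y : Fin n → Ω → ℝ) (c l : ℝ) (hc : 0 < c) (hl : 0 ≤ l)
    (hmeas : ∀ i : Fin n, StronglyMeasurable[ℱ (i.1+1)] (Y i))
    (hbdd : ∀ i, ∀ᵐ ω ∂μ, |Y i ω| ≤ c)
    (hce : ∀ i : Fin n, μ[Y i|ℱ i.1] =ᵐ[μ] 0) :
    ∫ ω, Real.exp (l * ∑ i, Y i ω) ∂μ ≤ Real.exp (n * ((l*c)^2/2)) := by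
  -- partial sums
  set F : ℕ → Finset (Fin n) := fun k => Finset.univ.filter (fun i : Fin n => i.1 < k) with hF
  set S : ℕ → Ω → ℝ := fun k ω => ∑ i ∈ F k, Y i ω with hS
  set g : ℕ → Ω → ℝ := fun k ω => Real.exp (l * S k ω) with hg
  have hSmeas : ∀ k, StronglyMeasurable[ℱ k] (S k) := by
    intro k
    refine Finset.stronglyMeasurable_fun_sum _ fun i hi => ?_
    have hik : i.1 + 1 ≤ k := by
      have := Finset.mem_filter.1 hi
      omega
    exact (hmeas i).mono (hmono hik)
  have hgmeas : ∀ k, StronglyMeasurable[ℱ k] (g k) := fun k =>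
    Real.continuous_exp.comp_stronglyMeasurable ((hSmeas k).const_mul l)
  have hball : ∀ᵐ ω ∂μ, ∀ i, |Y i ω| ≤ c := ae_all_iff.2 hbdd
  have hgbdd : ∀ k, ∀ᵐ ω ∂μ, ‖g k ω‖ ≤ Real.exp (l * (n * c)) := by
    intro k
    filter_upwards [hball] with ω hω
    have hsum : S k ω ≤ n * c := by
      calc S k ω ≤ ∑ i ∈ F k, c := Finset.sum_le_sum fun i _ => (abs_le.1 (hω i)).2
        _ = (F k).card * c := by simp [mul_comm]
        _ ≤ n * c := by
          have : (F k).card ≤ n := le_trans (Finset.card_filter_le _ _) (by simp)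
          exact mul_le_mul_of_nonneg_right (by exact_mod_cast this) hc.le
    rw [Real.norm_eq_abs, abs_of_pos (Real.exp_pos _), Real.exp_le_exp]
    exact mul_le_mul_of_nonneg_left hsum hl
  have hgint : ∀ k, Integrable (g k) μ := fun k =>
    (integrable_const _).mono' (((hgmeas k).mono (hle k)).aestronglyMeasurable) (hgbdd k)
  have hgpos : ∀ k ω, 0 < g k ω := fun k ω => Real.exp_pos _
  -- key induction
  have hind : ∀ k, ∫ ω, g k ω ∂μ ≤ Real.exp (k * ((l*c)^2/2)) := by
    intro k
    induction k with
    | zero =>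
      have : ∀ ω, g 0 ω = 1 := fun ω => by simp [hg, hS, hF]
      simp [this]
    | succ k ih =>
      by_cases hk : n ≤ k
      · have hFeq : F (k+1) = F k := by
          ext i
          simp only [hF, Finset.mem_filter, Finset.mem_univ, true_and]
          omega
        have : g (k+1) = g k := by
          funext ω; simp only [hg, hS, hFeq]
        rw [this]
        refine ih.trans (Real.exp_le_exp.2 ?_)
        have : (0:ℝ) ≤ (l*c)^2/2 := by positivity
        push_cast
        nlinarith
      · push_neg at hk
        set i0 : Fin n := ⟨k, hk⟩ with hi0
        have hnot : i0 ∉ F k := by simp [hF, hi0]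
        have hFeq : F (k+1) = insert i0 (F k) := by
          ext i
          simp only [hF, Finset.mem_filter, Finset.mem_univ, true_and, Finset.mem_insert,
            Fin.ext_iff, hi0]
          omega
        have hgprod : ∀ ω, g (k+1) ω = g k ω * Real.exp (l * Y i0 ω) := by
          intro ω
          simp only [hg, hS, hFeq, Finset.sum_insert hnot, mul_add, Real.exp_add, mul_comm]
        set h : Ω → ℝ := fun ω => Real.exp (l * Y i0 ω) with hh
        have hYi0m : AEStronglyMeasurable (Y i0) μ :=
          ((hmeas i0).mono (hle _)).aestronglyMeasurable
        have hhint : Integrable h μ := by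
          refine (integrable_const (Real.exp (l * c))).mono'
            (Real.continuous_exp.comp_aestronglyMeasurable (hYi0m.const_mul l)) ?_
          filter_upwards [hbdd i0] with ω hω
          rw [Real.norm_eq_abs, abs_of_pos (Real.exp_pos _), Real.exp_le_exp]
          exact mul_le_mul_of_nonneg_left (abs_le.1 hω).2 hl
        have hprodint : Integrable (g k * h) μ := by
          refine (integrable_const (Real.exp (l * (n * c)) * Real.exp (l * c))).mono'
            ((((hgmeas k).mono (hle k)).aestronglyMeasurable).mul
              (Real.continuous_exp.comp_aestronglyMeasurable (hYi0m.const_mul l))) ?_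
          filter_upwards [hgbdd k, hbdd i0] with ω h1 h2
          rw [Pi.mul_apply, norm_mul]
          refine mul_le_mul h1 ?_ (norm_nonneg _) (Real.exp_pos _).le
          rw [Real.norm_eq_abs, abs_of_pos (Real.exp_pos _), Real.exp_le_exp]
          exact mul_le_mul_of_nonneg_left (abs_le.1 h2).2 hl
        have hpull : μ[g k * h|ℱ k] =ᵐ[μ] g k * μ[h|ℱ k] :=
          condExp_mul_of_stronglyMeasurable_left (hgmeas k) hprodint hhint
        have hhce : μ[Y i0|ℱ k] =ᵐ[μ] 0 := hce i0
        have hcond : μ[h|ℱ k] ≤ᵐ[μ] fun _ => Real.exp ((l*c)^2/2) :=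
          condexp_exp_le (hle k) hYi0m hc hl (hbdd i0) hhce
        calc ∫ ω, g (k+1) ω ∂μ = ∫ ω, (g k * h) ω ∂μ := by
              refine integral_congr_ae (Filter.Eventually.of_forall fun ω => ?_)
              simp [hgprod ω, hh]
          _ = ∫ ω, (μ[g k * h|ℱ k]) ω ∂μ := (integral_condExp (hle k)).symm
          _ = ∫ ω, (g k * μ[h|ℱ k]) ω ∂μ := integral_congr_ae hpull
          _ ≤ ∫ ω, g k ω * Real.exp ((l*c)^2/2) ∂μ := by
              refine integral_mono_ae (integrable_condExp.congr hpull)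
                ((hgint k).mul_const _) ?_
              filter_upwards [hcond] with ω hω
              exact mul_le_mul_of_nonneg_left hω (hgpos k ω).le
          _ = (∫ ω, g k ω ∂μ) * Real.exp ((l*c)^2/2) := integral_mul_const _ _
          _ ≤ Real.exp (k * ((l*c)^2/2)) * Real.exp ((l*c)^2/2) :=
              mul_le_mul_of_nonneg_right ih (Real.exp_pos _).le
          _ = Real.exp ((↑(k+1) : ℝ) * ((l*c)^2/2)) := by
              rw [← Real.exp_add]; push_cast; ring_nf
  have hfin : F n = Finset.univ := by
    ext i; simp [hF, i.isLt]
  have := hind n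
  simp only [hg, hS, hfin] at this
  exact this

/-- Azuma tail bound. -/
lemma azuma_tail (μ : Measure Ω) [IsProbabilityMeasure μ] (n : ℕ) (hn : 1 ≤ n)
    (ℱ : ℕ → MeasurableSpace Ω) (hmono : Monotone ℱ) (hle : ∀ i, ℱ i ≤ mΩ)
    (Y : Fin n → Ω → ℝ) (c : ℝ) (hc : 0 < c)
    (hmeas : ∀ i : Fin n, StronglyMeasurable[ℱ (i.1+1)] (Y i))
    (hbdd : ∀ i, ∀ᵐ ω ∂μ, |Y i ω| ≤ c)
    (hce : ∀ i : Fin n, μ[Y i|ℱ i.1] =ᵐ[μ] 0)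
    (s : ℝ) (hs : 0 < s) :
    μ {ω | s ≤ ∑ i, Y i ω} ≤ ENNReal.ofReal (Real.exp (-s^2 / (2*n*c^2))) := by
  have hn0 : (0:ℝ) < n := by exact_mod_cast hn
  set l : ℝ := s / (n * c^2) with hl
  have hlpos : 0 < l := by positivity
  set Z : Ω → ℝ := fun ω => ∑ i, Y i ω with hZ
  set f : Ω → ℝ := fun ω => Real.exp (l * Z ω) with hf
  have hZmeas : AEStronglyMeasurable Z μ := by
    refine (Finset.stronglyMeasurable_fun_sum Finset.univ
      (fun i _ => ((hmeas i).mono (hle _)))).aestronglyMeasurable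
  have hball : ∀ᵐ ω ∂μ, ∀ i, |Y i ω| ≤ c := ae_all_iff.2 hbdd
  have hfint : Integrable f μ := by
    refine (integrable_const (Real.exp (l * (n * c)))).mono'
      (Real.continuous_exp.comp_aestronglyMeasurable (hZmeas.const_mul l)) ?_
    filter_upwards [hball] with ω hω
    rw [Real.norm_eq_abs, abs_of_pos (Real.exp_pos _), Real.exp_le_exp]
    refine mul_le_mul_of_nonneg_left ?_ hlpos.le
    calc Z ω ≤ ∑ i : Fin n, c := Finset.sum_le_sum fun i _ => (abs_le.1 (hω i)).2
      _ = n * c := by simp [mul_comm]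
  have hmgf : ∫ ω, f ω ∂μ ≤ Real.exp (n * ((l*c)^2/2)) :=
    mgf_bound μ n ℱ hmono hle Y c l hc hlpos.le hmeas hbdd hce
  have hsub : {ω | s ≤ Z ω} ⊆ {ω | Real.exp (l * s) ≤ f ω} := by
    intro ω hω
    simp only [Set.mem_setOf_eq] at *
    exact Real.exp_le_exp.2 (mul_le_mul_of_nonneg_left hω hlpos.le)
  have hmarkov := mul_meas_ge_le_integral_of_nonneg
    (Filter.Eventually.of_forall fun ω => (Real.exp_pos (l * Z ω)).le) hfint (Real.exp (l * s))
  -- conclude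
  have hmeasle : μ {ω | s ≤ Z ω} ≤ μ {ω | Real.exp (l * s) ≤ f ω} := measure_mono hsub
  have hfin1 : μ {ω | Real.exp (l * s) ≤ f ω} ≠ ⊤ := measure_ne_top _ _
  have htoReal : (μ {ω | Real.exp (l * s) ≤ f ω}).toReal
      ≤ Real.exp (- (l * s)) * Real.exp (n * ((l*c)^2/2)) := by
    have h1 : Real.exp (l * s) * (μ {ω | Real.exp (l * s) ≤ f ω}).toReal
        ≤ Real.exp (n * ((l*c)^2/2)) := hmarkov.trans hmgf
    rw [Real.exp_neg]
    rw [inv_mul_eq_div, le_div_iff₀ (Real.exp_pos _)]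
    nlinarith [Real.exp_pos (l * s), ENNReal.toReal_nonneg (a := μ {ω | Real.exp (l * s) ≤ f ω})]
  have hexp : Real.exp (- (l * s)) * Real.exp (n * ((l*c)^2/2))
      = Real.exp (-s^2 / (2*n*c^2)) := by
    rw [← Real.exp_add]
    congr 1
    rw [hl]
    field_simp
    ring
  calc μ {ω | s ≤ Z ω} ≤ μ {ω | Real.exp (l * s) ≤ f ω} := hmeasle
    _ = ENNReal.ofReal ((μ {ω | Real.exp (l * s) ≤ f ω}).toReal) :=
        (ENNReal.ofReal_toReal hfin1).symm
    _ ≤ ENNReal.ofReal (Real.exp (-s^2 / (2*n*c^2))) := by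
        refine ENNReal.ofReal_le_ofReal ?_
        rw [← hexp]; exact htoReal

end AzumaSec


lemma condexp_inner_comm {Ω : Type*} {mΩ : MeasurableSpace Ω} (μ : Measure Ω)
    [IsProbabilityMeasure μ] {m : MeasurableSpace Ω} (hm : m ≤ mΩ) {d : ℕ}
    (X : Ω → EuclideanSpace ℝ (Fin d)) (hX : Integrable X μ)
    (v : EuclideanSpace ℝ (Fin d)) :
    (fun ω => (inner ℝ v ((μ[X|m]) ω) : ℝ)) =ᵐ[μ] μ[fun ω => (inner ℝ v (X ω) : ℝ)|m] := by
  have h1 : Integrable (fun ω => (inner ℝ v (X ω) : ℝ)) μ := hX.const_inner v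
  have h2 : Integrable (μ[X|m]) μ := integrable_condExp
  have h3 : StronglyMeasurable[m] (fun ω => (inner ℝ v ((μ[X|m]) ω) : ℝ)) :=
    ((innerSL ℝ v).continuous).comp_stronglyMeasurable stronglyMeasurable_condExp
  refine ae_eq_condExp_of_forall_setIntegral_eq hm h1 ?_ ?_ ?_
  · intro s hs hμs
    have h4 : Integrable (fun ω => (inner ℝ v ((μ[X|m]) ω) : ℝ)) μ := h2.const_inner v
    exact h4.restrict
  · intro s hs hμs
    rw [integral_inner (h2.restrict) v, setIntegral_condExp hm hX hs,
      ← integral_inner (hX.restrict) v]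
  · exact StronglyMeasurable.aestronglyMeasurable h3


/-- Minkowski average `Θ = { (1/n) ∑ᵢ θᵢ : θᵢ ∈ Θᵢ }` of the sets `Θ₁, …, Θₙ`. -/
def minkowskiAverage {n d : ℕ} (Θs : Fin n → Set (EuclideanSpace ℝ (Fin d))) :
    Set (EuclideanSpace ℝ (Fin d)) :=
  {x | ∃ θ : Fin n → EuclideanSpace ℝ (Fin d),
    (∀ i, θ i ∈ Θs i) ∧ x = (n : ℝ)⁻¹ • ∑ i, θ i}

/-- Azuma–Hoeffding-type concentration inequality for the distance of the sample mean
to the Minkowski average of the sets `Θᵢ`, under a fixed probability measure. -/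
theorem azuma_hoeffding_type
    {Ω : Type*} {mΩ : MeasurableSpace Ω} (μ : Measure Ω) [IsProbabilityMeasure μ]
    (n d : ℕ) (hn : 1 ≤ n) (hd : 1 ≤ d)
    (ℱ : ℕ → MeasurableSpace Ω) (hℱ_mono : Monotone ℱ) (hℱ_le : ∀ i, ℱ i ≤ mΩ)
    (hℱ0 : ℱ 0 = ⊥)
    (Θs : Fin n → Set (EuclideanSpace ℝ (Fin d))) (hΘ : ∀ i, (Θs i).Nonempty)
    (X : Fin n → Ω → EuclideanSpace ℝ (Fin d)) (M : ℝ) (hM : 0 < M)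
    (h_meas : ∀ i : Fin n, StronglyMeasurable[ℱ (i.1 + 1)] (X i))
    (h_int : ∀ i, Integrable (X i) μ)
    (h_bdd : ∀ i, ∀ᵐ ω ∂μ, ‖X i ω‖ ≤ M)
    (h_ce : ∀ i : Fin n, ∀ᵐ ω ∂μ, (μ[X i | ℱ i.1]) ω ∈ Θs i)
    (t : ℝ) (ht : 0 < t) :
    (μ {ω | Metric.infDist ((n : ℝ)⁻¹ • ∑ i, X i ω) (minkowskiAverage Θs) > t}).toReal
      ≤ 2 * 5 ^ d * Real.exp (-(n * t ^ 2) / (32 * M ^ 2)) := by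
  classical
  have hn0 : (0:ℝ) < n := by exact_mod_cast hn
  have hM2 : (0:ℝ) < 2*M := by linarith
  obtain ⟨V, hVne, hVcard, hVnorm, hVnet⟩ := exists_net d hd
  set Z : Fin n → Ω → EuclideanSpace ℝ (Fin d) := fun i => μ[X i | ℱ i.1] with hZdef
  set Y : EuclideanSpace ℝ (Fin d) → Fin n → Ω → ℝ :=
    fun v i ω => (inner ℝ v (X i ω) : ℝ) - (inner ℝ v (Z i ω) : ℝ) with hYdef
  -- commuting conditional expectation with inner ℝ product
  have hinner_eq : ∀ (v : EuclideanSpace ℝ (Fin d)) (i : Fin n),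
      (fun ω => (inner ℝ v (Z i ω) : ℝ)) =ᵐ[μ] μ[fun ω => (inner ℝ v (X i ω) : ℝ)|ℱ i.1] :=
    fun v i => condexp_inner_comm μ (hℱ_le i.1) (X i) (h_int i) v
  have hinnerX_bdd : ∀ v ∈ V, ∀ i : Fin n, ∀ᵐ ω ∂μ, |(inner ℝ v (X i ω) : ℝ)| ≤ M := by
    intro v hv i
    filter_upwards [h_bdd i] with ω hω
    calc |(inner ℝ v (X i ω) : ℝ)| ≤ ‖v‖ * ‖X i ω‖ := abs_real_inner_le_norm _ _
      _ ≤ 1 * M := mul_le_mul (hVnorm v hv) hω (norm_nonneg _) zero_le_one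
      _ = M := one_mul M
  have hinnerZ_bdd : ∀ v ∈ V, ∀ i : Fin n, ∀ᵐ ω ∂μ, |(inner ℝ v (Z i ω) : ℝ)| ≤ M := by
    intro v hv i
    have hb := ae_bdd_condExp_of_ae_bdd (μ := μ) (m := ℱ i.1) (R := ⟨M, hM.le⟩)
      (f := fun ω => (inner ℝ v (X i ω) : ℝ)) (by exact hinnerX_bdd v hv i)
    filter_upwards [hb, hinner_eq v i] with ω h1 h2
    rw [h2]
    exact h1
  have hYmeas : ∀ (v : EuclideanSpace ℝ (Fin d)) (i : Fin n),
      StronglyMeasurable[ℱ (i.1+1)] (Y v i) := by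
    intro v i
    refine StronglyMeasurable.sub ?_ ?_
    · exact ((innerSL ℝ v).continuous).comp_stronglyMeasurable (h_meas i)
    · exact ((innerSL ℝ v).continuous).comp_stronglyMeasurable
        ((stronglyMeasurable_condExp).mono (hℱ_mono (Nat.le_succ i.1)))
  have hYbdd : ∀ v ∈ V, ∀ i : Fin n, ∀ᵐ ω ∂μ, |Y v i ω| ≤ 2*M := by
    intro v hv i
    filter_upwards [hinnerX_bdd v hv i, hinnerZ_bdd v hv i] with ω h1 h2
    calc |Y v i ω| ≤ |(inner ℝ v (X i ω) : ℝ)| + |(inner ℝ v (Z i ω) : ℝ)| := abs_sub _ _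
      _ ≤ 2*M := by linarith
  have hYce : ∀ (v : EuclideanSpace ℝ (Fin d)) (i : Fin n), μ[Y v i|ℱ i.1] =ᵐ[μ] 0 := by
    intro v i
    have hXi : Integrable (fun ω => (inner ℝ v (X i ω) : ℝ)) μ := (h_int i).const_inner v
    have hZi : Integrable (fun ω => (inner ℝ v (Z i ω) : ℝ)) μ :=
      Integrable.const_inner v (integrable_condExp)
    have h3 : StronglyMeasurable[ℱ i.1] (fun ω => (inner ℝ v (Z i ω) : ℝ)) :=
      ((innerSL ℝ v).continuous).comp_stronglyMeasurable stronglyMeasurable_condExp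
    have hsub := condExp_sub (μ := μ) (m := ℱ i.1) hXi hZi
    have hrfl : μ[(fun ω => (inner ℝ v (Z i ω) : ℝ))|ℱ i.1]
        = fun ω => (inner ℝ v (Z i ω) : ℝ) :=
      condExp_of_stronglyMeasurable (hℱ_le i.1) h3 hZi
    have : Y v i = (fun ω => (inner ℝ v (X i ω) : ℝ)) - (fun ω => (inner ℝ v (Z i ω) : ℝ)) := rfl
    rw [this]
    filter_upwards [hsub, hinner_eq v i] with ω h1 h2
    rw [Pi.zero_apply, h1, Pi.sub_apply, hrfl, ← h2]
    simp
  -- events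
  set A : EuclideanSpace ℝ (Fin d) → Set Ω :=
    fun v => {ω | (n : ℝ)*t/2 ≤ ∑ i, Y v i ω} with hAdef
  have hAbound : ∀ v ∈ V,
      μ (A v) ≤ ENNReal.ofReal (Real.exp (-((n:ℝ)*t/2)^2 / (2*n*(2*M)^2))) := by
    intro v hv
    exact azuma_tail μ n hn ℱ hℱ_mono hℱ_le (Y v) (2*M) hM2 (hYmeas v)
      (hYbdd v hv) (hYce v) ((n:ℝ)*t/2) (by positivity)
  have hexp_eq : -(((n:ℝ)*t/2)^2) / (2*n*(2*M)^2) = -((n:ℝ) * t ^ 2) / (32 * M ^ 2) := by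
    field_simp
    ring
  -- a.e. inclusion of the bad event in the union
  have hZmem : ∀ᵐ ω ∂μ, ∀ i, Z i ω ∈ Θs i := ae_all_iff.2 h_ce
  have hincl : ∀ᵐ ω ∂μ,
      ω ∈ {ω | Metric.infDist ((n : ℝ)⁻¹ • ∑ i, X i ω) (minkowskiAverage Θs) > t} →
      ω ∈ ⋃ v ∈ V, A v := by
    filter_upwards [hZmem] with ω hZω hbad
    simp only [Set.mem_setOf_eq, gt_iff_lt] at hbad
    have hmem : ((n:ℝ)⁻¹ • ∑ i, Z i ω) ∈ minkowskiAverage Θs :=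
      ⟨fun i => Z i ω, hZω, rfl⟩
    set a := (n:ℝ)⁻¹ • ∑ i, X i ω with ha
    set b := (n:ℝ)⁻¹ • ∑ i, Z i ω with hb
    have h1 : t < ‖a - b‖ := by
      have := Metric.infDist_le_dist_of_mem (x := a) hmem
      rw [dist_eq_norm] at this
      exact lt_of_lt_of_le hbad this
    obtain ⟨v, hvV, hvle⟩ := hVnet (a - b)
    have h2 : (inner ℝ v (a-b) : ℝ) = (n:ℝ)⁻¹ * ∑ i, Y v i ω := by
      have hab : a - b = (n:ℝ)⁻¹ • (∑ i, (X i ω - Z i ω)) := by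
        rw [ha, hb, ← smul_sub, Finset.sum_sub_distrib]
      rw [hab, real_inner_smul_right]
      congr 1
      rw [inner_sum]
      exact Finset.sum_congr rfl fun i _ => inner_sub_right _ _ _
    have h3 : (n:ℝ)*t/2 ≤ ∑ i, Y v i ω := by
      have h4 : t < 2 * ((n:ℝ)⁻¹ * ∑ i, Y v i ω) := by
        calc t < ‖a - b‖ := h1
          _ ≤ 2 * (inner ℝ v (a-b) : ℝ) := hvle
          _ = 2 * ((n:ℝ)⁻¹ * ∑ i, Y v i ω) := by rw [h2]
      have h5 : (n:ℝ)*t < 2 * ∑ i, Y v i ω := by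
        calc (n:ℝ)*t < (n:ℝ) * (2 * ((n:ℝ)⁻¹ * ∑ i, Y v i ω)) :=
              mul_lt_mul_of_pos_left h4 hn0
          _ = 2 * ∑ i, Y v i ω := by field_simp
      linarith
    exact Set.mem_biUnion hvV h3
  -- measure bound
  have hμle : μ {ω | Metric.infDist ((n : ℝ)⁻¹ • ∑ i, X i ω) (minkowskiAverage Θs) > t}
      ≤ ∑ v ∈ V, μ (A v) :=
    le_trans (measure_mono_ae hincl) (measure_biUnion_finset_le V A)
  have hsum : ∑ v ∈ V, μ (A v)
      ≤ ENNReal.ofReal (2 * 5 ^ d * Real.exp (-((n:ℝ) * t ^ 2) / (32 * M ^ 2))) := by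
    calc ∑ v ∈ V, μ (A v)
        ≤ ∑ _v ∈ V, ENNReal.ofReal (Real.exp (-((n:ℝ) * t ^ 2) / (32 * M ^ 2))) := by
          refine Finset.sum_le_sum fun v hv => ?_
          refine (hAbound v hv).trans_eq ?_
          congr 1
          rw [← hexp_eq]
      _ = (V.card : ℝ≥0∞) * ENNReal.ofReal (Real.exp (-((n:ℝ) * t ^ 2) / (32 * M ^ 2))) := by
          rw [Finset.sum_const, nsmul_eq_mul]
      _ ≤ ENNReal.ofReal (2 * 5 ^ d * Real.exp (-((n:ℝ) * t ^ 2) / (32 * M ^ 2))) := by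
          rw [← ENNReal.ofReal_natCast V.card, ← ENNReal.ofReal_mul (by positivity)]
          refine ENNReal.ofReal_le_ofReal ?_
          have hcard : (V.card : ℝ) ≤ (5:ℝ)^d := by exact_mod_cast hVcard
          have hE := Real.exp_pos (-((n:ℝ) * t ^ 2) / (32 * M ^ 2))
          nlinarith
  refine ENNReal.toReal_le_of_le_ofReal (by positivity) ?_
  exact hμle.trans hsum
end
end

section
/- Let X_1, …, X_n be integrable random vectors in ℝ^d, each X_i measurable with respect to F_i, such that the conditional expectation E_P[X_i | F_{i−1}] lies in Θ_i P-almost surely for each i. Define Y_i = X_i − E_P[X_i | F_{i−1}]. Suppose Ψ : (0, ∞) → [0, 1] is a decreasing function such that for every unit vector p ∈ ℝ^d and every s > 0, P( ∑_{i=1}^n ⟨p, Y_i⟩ ≥ s ) ≤ Ψ(s). Then for every t > 0, P( ρ_Θ( (1/n) ∑_{i=1}^n X_i ) > t ) ≤ 2 · 5^d · Ψ(n t / 2). -/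
open MeasureTheory ProbabilityTheory Real
open scoped RealInnerProductSpace

noncomputable section

lemma exists_sphere_net (d : ℕ) :
    ∃ S : Finset (EuclideanSpace ℝ (Fin d)),
      (∀ p ∈ S, ‖p‖ = 1) ∧ S.card ≤ 5 ^ d ∧
      ∀ u : EuclideanSpace ℝ (Fin d), ‖u‖ = 1 → ∃ p ∈ S, ‖u - p‖ ≤ 1 / 2 := by
  classical
  set E := EuclideanSpace ℝ (Fin d)
  set P : Finset E → Prop := fun S =>
    (∀ p ∈ S, ‖p‖ = 1) ∧ ∀ p ∈ S, ∀ q ∈ S, p ≠ q → 1 / 2 ≤ ‖p - q‖ with hP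
  have hcard : ∀ S : Finset E, P S → S.card ≤ 5 ^ d := by
    intro S hS
    have hinj : Function.Injective (fun x : E => (2 : ℝ) • x) :=
      smul_right_injective E (by norm_num)
    have := Besicovitch.card_le_of_separated (S.image fun x => (2 : ℝ) • x)
      (by
        intro c hc
        simp only [Finset.mem_image] at hc
        obtain ⟨p, hp, rfl⟩ := hc
        rw [norm_smul, hS.1 p hp]; norm_num)
      (by
        intro c hc q hq hne
        simp only [Finset.mem_image] at hc hq
        obtain ⟨p, hp, rfl⟩ := hc
        obtain ⟨r, hr, rfl⟩ := hq
        have hpr : p ≠ r := fun h => hne (by rw [h])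
        have := hS.2 p hp r hr hpr
        rw [← smul_sub, norm_smul]
        simp only [Real.norm_ofNat]
        linarith)
    rwa [Finset.card_image_of_injective _ hinj, finrank_euclideanSpace_fin] at this
  -- pick a separated finset of maximal cardinality
  set Q : ℕ → Prop := fun k => ∃ S : Finset E, P S ∧ S.card = k with hQ
  have h0 : Q 0 := ⟨∅, ⟨by simp, by simp⟩, rfl⟩
  have hk := Nat.findGreatest_spec (P := Q) (Nat.zero_le (5 ^ d)) h0
  obtain ⟨S, hPS, hcardS⟩ := hk
  have hmax : ∀ S' : Finset E, P S' → S'.card ≤ S.card := by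
    intro S' hS'
    rw [hcardS]
    exact Nat.le_findGreatest (hcard S' hS') ⟨S', hS', rfl⟩
  refine ⟨S, hPS.1, hcardS ▸ Nat.findGreatest_le _, ?_⟩
  intro u hu
  by_contra hcon
  push_neg at hcon
  have huS : u ∉ S := fun h => by
    have := hcon u h
    rw [sub_self, norm_zero] at this
    linarith
  have hPins : P (insert u S) := by
    constructor
    · intro p hp
      rcases Finset.mem_insert.1 hp with rfl | hp
      · exact hu
      · exact hPS.1 p hp
    · intro p hp q hq hne
      rcases Finset.mem_insert.1 hp with hpu | hp'
      · rcases Finset.mem_insert.1 hq with hqu | hq'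
        · exact absurd (hpu.trans hqu.symm) hne
        · subst hpu; exact le_of_lt (hcon q hq')
      · rcases Finset.mem_insert.1 hq with hqu | hq'
        · subst hqu; rw [norm_sub_rev]; exact le_of_lt (hcon p hp')
        · exact hPS.2 p hp' q hq' hne
  have := hmax _ hPins
  rw [Finset.card_insert_of_notMem huS] at this
  omega


/-- General concentration principle: a uniform scalar tail bound on one-dimensional
projections of the centred increments transfers to a tail bound on the distance of
the sample mean to the Minkowski average. -/
theorem general_concentration_principle
    {Ω : Type*} {mΩ : MeasurableSpace Ω} (μ : Measure Ω) [IsProbabilityMeasure μ]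
    (n d : ℕ) (hn : 1 ≤ n) (hd : 1 ≤ d)
    (ℱ : ℕ → MeasurableSpace Ω) (hℱ_mono : Monotone ℱ) (hℱ_le : ∀ i, ℱ i ≤ mΩ)
    (hℱ0 : ℱ 0 = ⊥)
    (Θs : Fin n → Set (EuclideanSpace ℝ (Fin d))) (hΘ : ∀ i, (Θs i).Nonempty)
    (X : Fin n → Ω → EuclideanSpace ℝ (Fin d))
    (h_meas : ∀ i : Fin n, StronglyMeasurable[ℱ (i.1 + 1)] (X i))
    (h_int : ∀ i, Integrable (X i) μ)
    (h_ce : ∀ i : Fin n, ∀ᵐ ω ∂μ, (μ[X i | ℱ i.1]) ω ∈ Θs i)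
    (Y : Fin n → Ω → EuclideanSpace ℝ (Fin d))
    (hY : ∀ i ω, Y i ω = X i ω - (μ[X i | ℱ i.1]) ω)
    (Ψ : ℝ → ℝ)
    (hΨ_anti : AntitoneOn Ψ (Set.Ioi 0))
    (hΨ_mem : ∀ s, 0 < s → Ψ s ∈ Set.Icc (0 : ℝ) 1)
    (hΨ_tail : ∀ p : EuclideanSpace ℝ (Fin d), ‖p‖ = 1 → ∀ s, 0 < s →
      (μ {ω | ∑ i, ⟪p, Y i ω⟫ ≥ s}).toReal ≤ Ψ s)
    (t : ℝ) (ht : 0 < t) :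
    (μ {ω | Metric.infDist ((n : ℝ)⁻¹ • ∑ i, X i ω) (minkowskiAverage Θs) > t}).toReal
      ≤ 2 * 5 ^ d * Ψ (n * t / 2) := by
  classical
  obtain ⟨S, hSnorm, hScard, hSnet⟩ := exists_sphere_net d
  have hn' : (0 : ℝ) < n := by exact_mod_cast hn
  have hs : (0 : ℝ) < (n : ℝ) * t / 2 := by positivity
  have hΨ0 : 0 ≤ Ψ ((n : ℝ) * t / 2) := (hΨ_mem _ hs).1
  set B : EuclideanSpace ℝ (Fin d) → Set Ω :=
    fun p => {ω | ∑ i, ⟪p, Y i ω⟫ ≥ (n : ℝ) * t / 2} with hB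
  have key : μ {ω | Metric.infDist ((n : ℝ)⁻¹ • ∑ i, X i ω) (minkowskiAverage Θs) > t}
      ≤ μ (⋃ p ∈ S, B p) := by
    apply measure_mono_ae
    have hE : ∀ᵐ ω ∂μ, ∀ i, (μ[X i | ℱ i.1]) ω ∈ Θs i := ae_all_iff.2 h_ce
    filter_upwards [hE] with ω hω hmem
    set v := ∑ i, Y i ω with hv
    have hΘmem : ((n : ℝ)⁻¹ • ∑ i, (μ[X i | ℱ i.1]) ω) ∈ minkowskiAverage Θs :=
      ⟨fun i => (μ[X i | ℱ i.1]) ω, hω, rfl⟩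
    have hdist : Metric.infDist ((n : ℝ)⁻¹ • ∑ i, X i ω) (minkowskiAverage Θs)
        ≤ (n : ℝ)⁻¹ * ‖v‖ := by
      have h1 := Metric.infDist_le_dist_of_mem (x := ((n : ℝ)⁻¹ • ∑ i, X i ω)) hΘmem
      have h2 : dist ((n : ℝ)⁻¹ • ∑ i, X i ω) ((n : ℝ)⁻¹ • ∑ i, (μ[X i | ℱ i.1]) ω)
          = (n : ℝ)⁻¹ * ‖v‖ := by
        rw [dist_eq_norm, ← smul_sub, ← Finset.sum_sub_distrib, norm_smul]
        have : ∀ i : Fin n, X i ω - (μ[X i | ℱ i.1]) ω = Y i ω := fun i => (hY i ω).symm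
        simp only [this]
        rw [Real.norm_eq_abs, abs_of_pos (by positivity)]
      linarith [h1, h2.le, h2.ge]
    have hvnorm : (n : ℝ) * t < ‖v‖ := by
      have h1 : t < (n : ℝ)⁻¹ * ‖v‖ := lt_of_lt_of_le hmem hdist
      have := mul_lt_mul_of_pos_left h1 hn'
      rwa [← mul_assoc, mul_inv_cancel₀ hn'.ne', one_mul] at this
    have hvpos : 0 < ‖v‖ := lt_trans (by positivity) hvnorm
    have hvne : v ≠ 0 := by simpa using hvpos.ne'
    have hu : ‖(‖v‖⁻¹ • v : EuclideanSpace ℝ (Fin d))‖ = 1 := norm_smul_inv_norm hvne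
    obtain ⟨p, hpS, hup⟩ := hSnet _ hu
    refine Set.mem_biUnion hpS ?_
    show ∑ i, ⟪p, Y i ω⟫ ≥ (n : ℝ) * t / 2
    have hsum : ∑ i, ⟪p, Y i ω⟫ = ⟪p, v⟫ := (inner_sum _ _ _).symm
    have huv : ⟪(‖v‖⁻¹ • v : EuclideanSpace ℝ (Fin d)), v⟫ = ‖v‖ := by
      rw [real_inner_smul_left, real_inner_self_eq_norm_sq]
      field_simp
    have hupv : ⟪(‖v‖⁻¹ • v : EuclideanSpace ℝ (Fin d)) - p, v⟫ ≤ ‖v‖ / 2 := by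
      calc ⟪(‖v‖⁻¹ • v : EuclideanSpace ℝ (Fin d)) - p, v⟫ ≤ ‖(‖v‖⁻¹ • v : EuclideanSpace ℝ (Fin d)) - p‖ * ‖v‖ :=
            real_inner_le_norm _ _
        _ ≤ (1 / 2) * ‖v‖ := mul_le_mul_of_nonneg_right hup (norm_nonneg v)
        _ = ‖v‖ / 2 := by ring
    have hpv : ⟪p, v⟫ = ⟪(‖v‖⁻¹ • v : EuclideanSpace ℝ (Fin d)), v⟫
        - ⟪(‖v‖⁻¹ • v : EuclideanSpace ℝ (Fin d)) - p, v⟫ := by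
      rw [inner_sub_left]; ring
    rw [hsum, hpv, huv]
    linarith
  have key2 : μ (⋃ p ∈ S, B p) ≤ ∑ p ∈ S, μ (B p) := measure_biUnion_finset_le S B
  have hfin : ∀ p ∈ S, μ (B p) ≠ ⊤ := fun p _ => measure_ne_top μ _
  have hsumfin : (∑ p ∈ S, μ (B p)) ≠ ⊤ := ENNReal.sum_ne_top.2 hfin
  calc (μ {ω | Metric.infDist ((n : ℝ)⁻¹ • ∑ i, X i ω) (minkowskiAverage Θs) > t}).toReal
      ≤ (∑ p ∈ S, μ (B p)).toReal := ENNReal.toReal_mono hsumfin (key.trans key2)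
    _ = ∑ p ∈ S, (μ (B p)).toReal := ENNReal.toReal_sum hfin
    _ ≤ ∑ p ∈ S, Ψ ((n : ℝ) * t / 2) :=
        Finset.sum_le_sum fun p hp => hΨ_tail p (hSnorm p hp) _ hs
    _ = (S.card : ℝ) * Ψ ((n : ℝ) * t / 2) := by rw [Finset.sum_const, nsmul_eq_mul]
    _ ≤ (5 ^ d : ℝ) * Ψ ((n : ℝ) * t / 2) := by
        apply mul_le_mul_of_nonneg_right _ hΨ0
        exact_mod_cast hScard
    _ ≤ 2 * 5 ^ d * Ψ ((n : ℝ) * t / 2) := by nlinarith [pow_pos (by norm_num : (0:ℝ) < 5) d]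
end
end
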